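/- arXiv:0908.1253 — 8 statements merged into one kernel-verified Lean document; each statement's English description precedes it below -/
import Mathlib

section
/- Let Ψ(α,β) = (1 − cos α)(1 − cos β) + (β − sin β)·sin α. If π/2 ≤ α ≤ 3π/2 and −α ≤ β ≤ 2π − α, then Ψ(α,β) ≥ 0. -/
/-! With `α = 2c`, the half-angle formulas give
`Ψ(α, β) = 2 sin c · (sin c + β cos c - sin (β + c))`. The first factor is nonnegative since
`0 ≤ c ≤ π`, and the second one says that `sin` lies below its tangent line at `c` at the point
`β + c ∈ [-c, 2π - c]`: on `[-c, c]` we have `cos ≥ cos c` and on `[c, 2π - c]` we have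
`cos ≤ cos c`, so `sin y - y cos c` increases up to `c` and decreases after it. -/

open Real Set

lemma cos_le_cos_of_le_of_le_two_pi_sub {c y : ℝ} (hc : 0 ≤ c) (hcy : c ≤ y)
    (hy : y ≤ 2 * π - c) : cos y ≤ cos c := by
  rcases le_total y π with hyπ | hπy
  · exact cos_le_cos_of_nonneg_of_le_pi hc hyπ hcy
  · rw [← cos_two_pi_sub y]
    exact cos_le_cos_of_nonneg_of_le_pi hc (by linarith) (by linarith)

lemma cos_le_cos_of_abs_le {c y : ℝ} (hc : c ≤ π) (hy : |y| ≤ c) : cos c ≤ cos y := by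
  rw [← cos_abs y]
  exact cos_le_cos_of_nonneg_of_le_pi (abs_nonneg y) hc hy

lemma sin_le_sin_add_sub_mul_cos {c x : ℝ} (hc₀ : 0 ≤ c) (hcπ : c ≤ π) (hx₁ : -c ≤ x)
    (hx₂ : x ≤ 2 * π - c) : sin x ≤ sin c + (x - c) * cos c := by
  let G : ℝ → ℝ := fun y ↦ sin y - y * cos c
  have hG : ∀ y, HasDerivAt G (cos y - cos c) y := fun y ↦ by
    have := (hasDerivAt_sin y).sub ((hasDerivAt_id y).mul_const (cos c))
    rwa [one_mul] at this
  have hGcont : Continuous G := by fun_prop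
  have hGx : G x ≤ G c := by
    rcases le_total x c with hxc | hcx
    · have hmono : MonotoneOn G (Icc (-c) c) :=
        monotoneOn_of_hasDerivWithinAt_nonneg (convex_Icc _ _) hGcont.continuousOn
          (fun y _ ↦ (hG y).hasDerivWithinAt) fun y hy ↦ by
            rw [interior_Icc] at hy
            exact sub_nonneg.2 (cos_le_cos_of_abs_le hcπ (abs_le.2 ⟨hy.1.le, hy.2.le⟩))
      exact hmono ⟨hx₁, hxc⟩ ⟨by linarith, le_rfl⟩ hxc
    · have hanti : AntitoneOn G (Icc c (2 * π - c)) :=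
        antitoneOn_of_hasDerivWithinAt_nonpos (convex_Icc _ _) hGcont.continuousOn
          (fun y _ ↦ (hG y).hasDerivWithinAt) fun y hy ↦ by
            rw [interior_Icc] at hy
            exact sub_nonpos.2 (cos_le_cos_of_le_of_le_two_pi_sub hc₀ hy.1.le hy.2.le)
      exact hanti ⟨le_rfl, by linarith⟩ ⟨hcx, hx₂⟩ hcx
  simp only [G] at hGx
  linarith

theorem stmt1 (α β : ℝ) (h1 : π / 2 ≤ α) (h2 : α ≤ 3 * π / 2)
    (h3 : -α ≤ β) (h4 : β ≤ 2 * π - α) :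
    (1 - Real.cos α) * (1 - Real.cos β) + (β - Real.sin β) * Real.sin α ≥ 0 := by
  obtain ⟨c, rfl⟩ : ∃ c, α = 2 * c := ⟨α / 2, by ring⟩
  have hc₀ : 0 ≤ c := by linarith [pi_pos]
  have hcπ : c ≤ π := by linarith [pi_pos]
  have hΨ : (1 - cos (2 * c)) * (1 - cos β) + (β - sin β) * sin (2 * c)
      = 2 * sin c * (sin c + β * cos c - sin (β + c)) := by
    rw [cos_two_mul', sin_two_mul, sin_add]
    linear_combination (cos β - 1) * sin_sq_add_cos_sq c
  have htangent : sin (β + c) ≤ sin c + (β + c - c) * cos c :=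
    sin_le_sin_add_sub_mul_cos hc₀ hcπ (by linarith) (by linarith)
  rw [ge_iff_le, hΨ]
  exact mul_nonneg (mul_nonneg zero_le_two (sin_nonneg_of_nonneg_of_le_pi hc₀ hcπ))
    (by linarith)
end

section
/- For −π ≤ β ≤ −π/2, one has 2 − 2·cos β − β·sin β > 0. -/
open Real

/-- Jordan's inequality `1 - 2x/π ≤ cos x` on `[0, π/2]`, transported to `[-π, -π/2]` by
`cos (x + π) = -cos x`. -/
lemma Real.cos_le_one_add_mul_of_le_neg_pi_div_two {x : ℝ} (hx₀ : -π ≤ x) (hx : x ≤ -(π / 2)) :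
    cos x ≤ 1 + 2 / π * x := by
  have hJordan := one_sub_mul_le_cos (x := x + π) (by linarith) (by linarith)
  rw [cos_add_pi, mul_add, div_mul_cancel₀ _ pi_pos.ne'] at hJordan
  linarith

/- The chord bound gives `2 - 2 cos β ≥ 4|β|/π`, while `β sin β ≤ |β|`; they differ because
`π < 4`. -/
theorem stmt3 (β : ℝ) (h1 : -π ≤ β) (h2 : β ≤ -(π / 2)) :
    2 - 2 * Real.cos β - β * Real.sin β > 0 := by
  have hβ : β < 0 := by linarith [pi_pos]
  have hcos := cos_le_one_add_mul_of_le_neg_pi_div_two h1 h2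
  have hsin : β * sin β ≤ -β := by nlinarith [neg_one_le_sin β]
  have hslope : 2 / π * β < 1 / 2 * β := by
    refine mul_lt_mul_of_neg_right ?_ hβ
    rw [lt_div_iff₀ pi_pos]
    linarith [pi_lt_four]
  linarith
end

section
/- Let ξ : [0, 2π] → ℝ be C¹, increasing, with ξ(2π) = ξ(0) + 2π. Then the double integral over [0,2π]² of (1 − cos(ξ(θ) − ξ(φ)))/(1 − cos(θ − φ)) · (ξ'(θ) − 1) dθ dφ is nonnegative. Equality holds if and only if ξ(θ) = θ + c for some constant c. -/
/-!
Write `versin x = 1 - cos x` and `antiVersin x = x - sin x`, so that `antiVersin' = versin`. Fix `φ`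
and put `a = ξ θ - ξ φ`, `b = θ - φ`. The function `W(θ) = (antiVersin a - antiVersin b) / versin b`
satisfies `W' = versin a / versin b * (ξ' - 1) - defect a b / versin b ^ 2`, where
`defect a b = (antiVersin a - antiVersin b) * sin b - (versin a - versin b) * versin b`, and
`W(2π) = W(0)` because `ξ` has degree one. So integrating in `θ` first turns the integrand into
`defect a b / versin b ^ 2`.

For `b ∈ (0, 2π)`, `a ↦ defect a b` differs by a constant from a function with derivative
`4 sin(a/2) sin(b/2) sin((a-b)/2)`, hence is minimal, and zero, exactly at `a = b` on `[0, 2π]`; and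
`a ∈ [0, 2π]` since `ξ` is monotone of degree one. The double integral is therefore nonnegative, and
it vanishes iff `ξ θ - ξ φ = θ - φ` for all `θ ≠ φ`.

A Lipschitz bound on `ξ`, at both ends of `[0, 2π]`, gives `versin a ≲ versin b` and
`|defect a b| ≲ versin b ^ 2`; this makes both integrands bounded, which justifies Fubini.
-/

open Real Set MeasureTheory

noncomputable section

def versin (x : ℝ) : ℝ := 1 - cos x

def antiVersin (x : ℝ) : ℝ := x - sin x

@[fun_prop]
lemma continuous_versin : Continuous versin := by unfold versin; fun_prop

@[fun_prop]
lemma continuous_antiVersin : Continuous antiVersin := by unfold antiVersin; fun_prop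

lemma hasDerivAt_versin (x : ℝ) : HasDerivAt versin (sin x) x :=
  ((hasDerivAt_cos x).const_sub 1).congr_deriv (neg_neg _)

lemma hasDerivAt_antiVersin (x : ℝ) : HasDerivAt antiVersin (versin x) x :=
  (hasDerivAt_id x).sub (hasDerivAt_sin x)

lemma versin_nonneg (x : ℝ) : 0 ≤ versin x := sub_nonneg.2 (cos_le_one x)

@[simp] lemma versin_neg (x : ℝ) : versin (-x) = versin x := by simp [versin]

@[simp] lemma versin_abs (x : ℝ) : versin |x| = versin x := by simp [versin]

@[simp] lemma versin_add_two_pi (x : ℝ) : versin (x + 2 * π) = versin x := by simp [versin]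

@[simp] lemma versin_two_pi_sub (x : ℝ) : versin (2 * π - x) = versin x := by simp [versin]

lemma antiVersin_add_two_pi (x : ℝ) : antiVersin (x + 2 * π) = antiVersin x + 2 * π := by
  simp only [antiVersin, sin_add_two_pi]; ring

lemma versin_eq_two_mul_sin_sq (x : ℝ) : versin x = 2 * sin (x / 2) ^ 2 := by
  rw [versin, sin_sq_eq_half_sub, mul_div_cancel₀ x two_ne_zero]; ring

lemma versin_le_sq_div_two (x : ℝ) : versin x ≤ x ^ 2 / 2 := by
  linarith [one_sub_sq_div_two_le_cos (x := x), show versin x = 1 - cos x from rfl]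

/-- Jordan's inequality `2t/π ≤ sin t` on `[0, π/2]`, squared. -/
lemma sq_le_pi_sq_div_two_mul_versin {x : ℝ} (hx : |x| ≤ π) : x ^ 2 ≤ π ^ 2 / 2 * versin x := by
  have hsin : |x| / π ≤ sin (|x| / 2) := by
    have := mul_le_sin (x := |x| / 2) (by positivity) (by linarith)
    rwa [show 2 / π * (|x| / 2) = |x| / π by ring] at this
  have hsq := pow_le_pow_left₀ (by positivity) hsin 2
  rw [div_pow, sq_abs, div_le_iff₀ (by positivity)] at hsq
  rw [← versin_abs, versin_eq_two_mul_sin_sq]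
  linarith

lemma versin_pos {x : ℝ} (h0 : x ≠ 0) (hx : |x| < 2 * π) : 0 < versin x := by
  rw [← versin_abs, versin_eq_two_mul_sin_sq]
  have := sin_pos_of_pos_of_lt_pi (x := |x| / 2) (by positivity) (by linarith)
  positivity

lemma versin_sub_ne_zero {θ φ : ℝ} (hθ : θ ∈ Icc 0 (2 * π)) (hφ : φ ∈ Ioo 0 (2 * π))
    (hne : θ ≠ φ) : versin (θ - φ) ≠ 0 :=
  (versin_pos (sub_ne_zero.2 hne)
    (abs_lt.2 ⟨by linarith [hθ.1, hφ.2], by linarith [hθ.2, hφ.1]⟩)).ne'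

lemma antiVersin_neg (x : ℝ) : antiVersin (-x) = -antiVersin x := by
  simp only [antiVersin, sin_neg]; ring

lemma abs_antiVersin_le (x : ℝ) : |antiVersin x| ≤ |x| ^ 3 / 6 := by
  have key : ∀ y, 0 ≤ y → |antiVersin y| ≤ y ^ 3 / 6 := fun y hy => by
    rw [abs_le, antiVersin]
    constructor <;> linarith [sin_le hy, sin_ge_sub_cube hy, pow_nonneg hy 3]
  rcases le_total 0 x with hx | hx
  · simpa [abs_of_nonneg hx] using key x hx
  · simpa [abs_of_nonpos hx, antiVersin_neg] using key (-x) (neg_nonneg.2 hx)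

def defect (a b : ℝ) : ℝ :=
  (antiVersin a - antiVersin b) * sin b - (versin a - versin b) * versin b

def defectPotential (b a : ℝ) : ℝ := antiVersin a * sin b + cos a * versin b

@[fun_prop]
lemma continuous_defect : Continuous fun p : ℝ × ℝ => defect p.1 p.2 := by
  unfold defect; fun_prop

lemma continuous_defectPotential (b : ℝ) : Continuous (defectPotential b) := by
  unfold defectPotential; fun_prop

lemma defect_eq_sub (a b : ℝ) : defect a b = defectPotential b a - defectPotential b b := by
  simp only [defect, defectPotential, versin]; ring

@[simp] lemma defect_self (a : ℝ) : defect a a = 0 := by simp [defect]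

lemma defect_neg_neg (a b : ℝ) : defect (-a) (-b) = defect a b := by
  simp only [defect, antiVersin_neg, versin_neg, sin_neg]; ring

lemma defect_two_pi_sub (a b : ℝ) : defect (2 * π - a) (2 * π - b) = defect a b := by
  have hsin (x : ℝ) : sin (2 * π - x) = -sin x := by simp [sin_sub]
  simp only [defect, antiVersin, versin_two_pi_sub, hsin]; ring

lemma hasDerivAt_defectPotential (b a : ℝ) :
    HasDerivAt (defectPotential b) (4 * sin (a / 2) * sin (b / 2) * sin ((a - b) / 2)) a := by
  have h := ((hasDerivAt_antiVersin a).mul_const (sin b)).add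
    ((hasDerivAt_cos a).mul_const (versin b))
  refine h.congr_deriv ?_
  obtain ⟨α, rfl⟩ : ∃ α, a = 2 * α := ⟨a / 2, by ring⟩
  obtain ⟨β, rfl⟩ : ∃ β, b = 2 * β := ⟨b / 2, by ring⟩
  rw [show (2 * α - 2 * β) / 2 = α - β by ring, mul_div_cancel_left₀ _ two_ne_zero,
    mul_div_cancel_left₀ _ two_ne_zero, versin, versin, sin_two_mul, sin_two_mul, cos_two_mul,
    cos_two_mul, sin_sub]
  linear_combination (-4 * sin β * cos β) * sin_sq_add_cos_sq α +
    (4 * sin α * cos α) * sin_sq_add_cos_sq β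

lemma strictAntiOn_defectPotential {b : ℝ} (hb0 : 0 < b) (hb : b < 2 * π) :
    StrictAntiOn (defectPotential b) (Icc 0 b) := by
  refine strictAntiOn_of_deriv_neg (convex_Icc _ _) (continuous_defectPotential b).continuousOn
    fun x hx => ?_
  rw [interior_Icc] at hx
  rw [(hasDerivAt_defectPotential b x).deriv]
  have h1 := sin_pos_of_pos_of_lt_pi (x := x / 2) (by linarith [hx.1]) (by linarith [hx.2])
  have h2 := sin_pos_of_pos_of_lt_pi (x := b / 2) (by linarith) (by linarith)
  have h3 := sin_neg_of_neg_of_neg_pi_lt (x := (x - b) / 2) (by linarith [hx.2])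
    (by linarith [hx.1])
  exact mul_neg_of_pos_of_neg (by positivity) h3

lemma strictMonoOn_defectPotential {b : ℝ} (hb0 : 0 < b) (hb : b < 2 * π) :
    StrictMonoOn (defectPotential b) (Icc b (2 * π)) := by
  refine strictMonoOn_of_deriv_pos (convex_Icc _ _) (continuous_defectPotential b).continuousOn
    fun x hx => ?_
  rw [interior_Icc] at hx
  rw [(hasDerivAt_defectPotential b x).deriv]
  have h1 := sin_pos_of_pos_of_lt_pi (x := x / 2) (by linarith [hx.1]) (by linarith [hx.2])
  have h2 := sin_pos_of_pos_of_lt_pi (x := b / 2) (by linarith) (by linarith)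
  have h3 := sin_pos_of_pos_of_lt_pi (x := (x - b) / 2) (by linarith [hx.1]) (by linarith [hx.2])
  positivity

lemma defect_pos {a b : ℝ} (ha : a ∈ Icc 0 (2 * π)) (hb : b ∈ Ioo 0 (2 * π)) (hab : a ≠ b) :
    0 < defect a b := by
  rw [defect_eq_sub, sub_pos]
  rcases hab.lt_or_gt with h | h
  · exact strictAntiOn_defectPotential hb.1 hb.2 ⟨ha.1, h.le⟩ ⟨hb.1.le, le_rfl⟩ h
  · exact strictMonoOn_defectPotential hb.1 hb.2 ⟨le_rfl, hb.2.le⟩ ⟨h.le, ha.2⟩ h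

lemma defect_nonneg {a b : ℝ} (ha : a ∈ Icc 0 (2 * π)) (hb : b ∈ Icc 0 (2 * π)) :
    0 ≤ defect a b := by
  rcases eq_or_ne a b with rfl | hab
  · simp
  rcases eq_endpoints_or_mem_Ioo_of_mem_Icc hb with rfl | rfl | hb'
  · simp [defect, versin]
  · simp [defect, versin]
  · exact (defect_pos ha hb' hab).le

lemma versin_le_of_abs_le_mul {L a b : ℝ} (hab : |a| ≤ L * b) (hb : b ∈ Icc 0 π) :
    versin a ≤ L ^ 2 * π ^ 2 / 4 * versin b := by
  have hb' := sq_le_pi_sq_div_two_mul_versin (x := b) (by rw [abs_of_nonneg hb.1]; exact hb.2)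
  have ha : a ^ 2 ≤ L ^ 2 * b ^ 2 := by
    simpa [sq_abs, mul_pow] using pow_le_pow_left₀ (abs_nonneg a) hab 2
  calc versin a ≤ a ^ 2 / 2 := versin_le_sq_div_two a
    _ ≤ L ^ 2 * b ^ 2 / 2 := by linarith
    _ ≤ L ^ 2 * π ^ 2 / 4 * versin b := by nlinarith [sq_nonneg L]

lemma abs_defect_le_of_abs_le_mul {L a b : ℝ} (hL : 0 ≤ L) (hab : |a| ≤ L * b) (hb : b ∈ Icc 0 π) :
    |defect a b| ≤ ((L ^ 3 + 1) / 6 + (L ^ 2 + 1) / 4) * π ^ 4 / 4 * versin b ^ 2 := by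
  have hb0 := hb.1
  have ha3 : |a| ^ 3 ≤ L ^ 3 * b ^ 3 := by
    simpa [mul_pow] using pow_le_pow_left₀ (abs_nonneg a) hab 3
  have ha2 : a ^ 2 ≤ L ^ 2 * b ^ 2 := by
    simpa [sq_abs, mul_pow] using pow_le_pow_left₀ (abs_nonneg a) hab 2
  have hG : |antiVersin a - antiVersin b| ≤ (L ^ 3 + 1) * b ^ 3 / 6 := by
    have := abs_antiVersin_le b
    rw [abs_of_nonneg hb0] at this
    linarith [abs_sub (antiVersin a) (antiVersin b), abs_antiVersin_le a]
  have hF : |versin a - versin b| ≤ (L ^ 2 + 1) * b ^ 2 / 2 := by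
    rw [abs_le]
    constructor <;> linarith [versin_le_sq_div_two a, versin_le_sq_div_two b, versin_nonneg a,
      versin_nonneg b]
  have hsin : |sin b| ≤ b := by simpa [abs_of_nonneg hb0] using abs_sin_le_abs (x := b)
  have hb4 : b ^ 4 ≤ π ^ 4 / 4 * versin b ^ 2 := by
    have h := pow_le_pow_left₀ (sq_nonneg b)
      (sq_le_pi_sq_div_two_mul_versin (x := b) (by rw [abs_of_nonneg hb0]; exact hb.2)) 2
    linarith
  calc |defect a b|
      ≤ |antiVersin a - antiVersin b| * |sin b| + |versin a - versin b| * versin b := by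
        rw [defect, ← abs_mul, ← abs_of_nonneg (versin_nonneg b), ← abs_mul,
          abs_of_nonneg (versin_nonneg b)]
        exact abs_sub _ _
    _ ≤ (L ^ 3 + 1) * b ^ 3 / 6 * b + (L ^ 2 + 1) * b ^ 2 / 2 * (b ^ 2 / 2) := by
        gcongr
        · exact versin_nonneg b
        · exact versin_le_sq_div_two b
    _ = ((L ^ 3 + 1) / 6 + (L ^ 2 + 1) / 4) * b ^ 4 := by ring
    _ ≤ _ := by rw [mul_div_assoc, mul_assoc]; gcongr

/-- Near `b = 2π` the bounds follow from those near `b = 0` by the reflection `x ↦ 2π - x`. -/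
lemma exists_versin_le_and_abs_defect_le {L : ℝ} (hL : 0 ≤ L) :
    ∃ C, 0 ≤ C ∧ ∀ a ∈ Icc 0 (2 * π), ∀ b ∈ Icc 0 (2 * π), a ≤ L * b →
      2 * π - a ≤ L * (2 * π - b) → versin a ≤ C * versin b ∧ |defect a b| ≤ C * versin b ^ 2 := by
  set C := max (L ^ 2 * π ^ 2 / 4) (((L ^ 3 + 1) / 6 + (L ^ 2 + 1) / 4) * π ^ 4 / 4)
  have near_zero (a b : ℝ) (hab : |a| ≤ L * b) (hb : b ∈ Icc 0 π) :
      versin a ≤ C * versin b ∧ |defect a b| ≤ C * versin b ^ 2 :=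
    ⟨(versin_le_of_abs_le_mul hab hb).trans (by gcongr; exacts [versin_nonneg b, le_max_left ..]),
      (abs_defect_le_of_abs_le_mul hL hab hb).trans (by gcongr; exact le_max_right ..)⟩
  refine ⟨C, le_max_of_le_left (by positivity), fun a ha b hb h0 h2π => ?_⟩
  rcases le_total b π with hbπ | hπb
  · exact near_zero a b (by rwa [abs_of_nonneg ha.1]) ⟨hb.1, hbπ⟩
  · have := near_zero (2 * π - a) (2 * π - b) (by rwa [abs_of_nonneg (by linarith [ha.2])])
      ⟨by linarith [hb.2], by linarith⟩
    rwa [versin_two_pi_sub, versin_two_pi_sub, defect_two_pi_sub] at this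

/-- `ξ` and (in `derivIcc`) its one-sided derivative on `[0, 2π]`, extended to `ℝ` as constants,
so that the kernels below are defined and measurable on all of `ℝ²`; only their values on
`[0, 2π]²` matter. -/
def extIcc (ξ : ℝ → ℝ) (x : ℝ) : ℝ := ξ (projIcc 0 (2 * π) two_pi_pos.le x)

def derivIcc (ξ : ℝ → ℝ) (x : ℝ) : ℝ :=
  derivWithin ξ (Icc 0 (2 * π)) (projIcc 0 (2 * π) two_pi_pos.le x)

section Extension

variable {ξ : ℝ → ℝ}

lemma extIcc_of_mem {x : ℝ} (hx : x ∈ Icc 0 (2 * π)) : extIcc ξ x = ξ x := by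
  rw [extIcc, projIcc_of_mem _ hx]

lemma derivIcc_of_mem_Ioo {x : ℝ} (hx : x ∈ Ioo 0 (2 * π)) : derivIcc ξ x = deriv ξ x := by
  rw [derivIcc, projIcc_of_mem _ (Ioo_subset_Icc_self hx),
    derivWithin_of_mem_nhds (Icc_mem_nhds hx.1 hx.2)]

lemma continuous_extIcc (hξ : ContinuousOn ξ (Icc 0 (2 * π))) : Continuous (extIcc ξ) :=
  hξ.comp_continuous (continuous_subtype_val.comp continuous_projIcc) fun x => (projIcc _ _ _ x).2

lemma continuous_derivIcc (hξ : ContDiffOn ℝ 1 ξ (Icc 0 (2 * π))) : Continuous (derivIcc ξ) :=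
  (hξ.continuousOn_derivWithin (uniqueDiffOn_Icc two_pi_pos) le_rfl).comp_continuous
    (continuous_subtype_val.comp continuous_projIcc) fun x => (projIcc _ _ _ x).2

lemma hasDerivAt_extIcc (hξ : DifferentiableOn ℝ ξ (Icc 0 (2 * π))) {x : ℝ}
    (hx : x ∈ Ioo 0 (2 * π)) : HasDerivAt (extIcc ξ) (derivIcc ξ x) x := by
  have hnhds : Icc 0 (2 * π) ∈ nhds x := Icc_mem_nhds hx.1 hx.2
  rw [derivIcc_of_mem_Ioo hx]
  exact (hξ.differentiableAt hnhds).hasDerivAt.congr_of_eventuallyEq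
    (Filter.eventuallyEq_of_mem hnhds fun y hy => extIcc_of_mem hy)

lemma exists_abs_derivIcc_le_and_lipschitz (hξ : ContDiffOn ℝ 1 ξ (Icc 0 (2 * π))) :
    ∃ L, 0 ≤ L ∧ (∀ x, |derivIcc ξ x| ≤ L) ∧ ∀ x y, |extIcc ξ x - extIcc ξ y| ≤ L * |x - y| := by
  obtain ⟨L, hL⟩ := isCompact_Icc.exists_bound_of_continuousOn
    (hξ.continuousOn_derivWithin (uniqueDiffOn_Icc two_pi_pos) le_rfl)
  have hL0 : 0 ≤ L := (norm_nonneg _).trans (hL 0 ⟨le_rfl, two_pi_pos.le⟩)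
  refine ⟨L, hL0, fun x => hL _ (projIcc _ _ _ x).2, fun x y => ?_⟩
  have hξL := (convex_Icc 0 (2 * π)).norm_image_sub_le_of_norm_derivWithin_le
    (hξ.differentiableOn one_ne_zero) hL (projIcc _ _ two_pi_pos.le y).2
    (projIcc _ _ two_pi_pos.le x).2
  have hproj := (LipschitzWith.projIcc two_pi_pos.le).dist_le_mul x y
  simp only [Real.norm_eq_abs, NNReal.coe_one, one_mul, Subtype.dist_eq, Real.dist_eq] at hξL hproj
  exact hξL.trans (by gcongr)

lemma sub_mem_Icc_of_monotoneOn (hmono : MonotoneOn ξ (Icc 0 (2 * π)))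
    (hdeg : ξ (2 * π) = ξ 0 + 2 * π) {x y : ℝ} (hx : x ∈ Icc 0 (2 * π)) (hy : y ∈ Icc 0 (2 * π))
    (hxy : x ≤ y) : ξ y - ξ x ∈ Icc 0 (2 * π) := by
  have h0 : (0 : ℝ) ∈ Icc 0 (2 * π) := ⟨le_rfl, two_pi_pos.le⟩
  have h2π : 2 * π ∈ Icc 0 (2 * π) := ⟨two_pi_pos.le, le_rfl⟩
  constructor
  · linarith [hmono hx hy hxy]
  · linarith [hmono h0 hx hx.1, hmono hy h2π hy.2]

end Extension

def kernel (ξ : ℝ → ℝ) (θ φ : ℝ) : ℝ :=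
  versin (extIcc ξ θ - extIcc ξ φ) / versin (θ - φ) * (derivIcc ξ θ - 1)

def defectKernel (ξ : ℝ → ℝ) (θ φ : ℝ) : ℝ :=
  defect (extIcc ξ θ - extIcc ξ φ) (θ - φ) / versin (θ - φ) ^ 2

def kernelPrimitive (ξ : ℝ → ℝ) (φ θ : ℝ) : ℝ :=
  (antiVersin (extIcc ξ θ - extIcc ξ φ) - antiVersin (θ - φ)) / versin (θ - φ)

section Kernels

variable {ξ : ℝ → ℝ}

lemma defectKernel_nonneg (hmono : MonotoneOn ξ (Icc 0 (2 * π)))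
    (hdeg : ξ (2 * π) = ξ 0 + 2 * π) {θ φ : ℝ} (hθ : θ ∈ Icc 0 (2 * π))
    (hφ : φ ∈ Icc 0 (2 * π)) : 0 ≤ defectKernel ξ θ φ := by
  refine div_nonneg ?_ (sq_nonneg _)
  rw [extIcc_of_mem hθ, extIcc_of_mem hφ]
  wlog hφθ : φ ≤ θ generalizing θ φ
  · rw [← defect_neg_neg, neg_sub, neg_sub]
    exact this hφ hθ (le_of_not_ge hφθ)
  exact defect_nonneg (sub_mem_Icc_of_monotoneOn hmono hdeg hφ hθ hφθ)
    ⟨sub_nonneg.2 hφθ, by linarith [hθ.2, hφ.1]⟩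

lemma eq_of_defect_eq_zero (hmono : MonotoneOn ξ (Icc 0 (2 * π)))
    (hdeg : ξ (2 * π) = ξ 0 + 2 * π) {θ φ : ℝ} (hθ : θ ∈ Ioo 0 (2 * π))
    (hφ : φ ∈ Ioo 0 (2 * π)) (h : defect (ξ θ - ξ φ) (θ - φ) = 0) : ξ θ - ξ φ = θ - φ := by
  wlog hφθ : φ < θ generalizing θ φ
  · rcases (le_of_not_gt hφθ).eq_or_lt with rfl | hθφ
    · simp
    · rw [← defect_neg_neg, neg_sub, neg_sub] at h
      linarith [this hφ hθ h hθφ]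
  by_contra hne
  refine (defect_pos (sub_mem_Icc_of_monotoneOn hmono hdeg (Ioo_subset_Icc_self hφ)
    (Ioo_subset_Icc_self hθ) hφθ.le) ⟨sub_pos.2 hφθ, by linarith [hθ.2, hφ.1]⟩ hne).ne' h

lemma exists_abs_kernel_le (hC1 : ContDiffOn ℝ 1 ξ (Icc 0 (2 * π)))
    (hmono : MonotoneOn ξ (Icc 0 (2 * π))) (hdeg : ξ (2 * π) = ξ 0 + 2 * π) :
    ∃ M, ∀ θ ∈ Icc 0 (2 * π), ∀ φ ∈ Icc 0 (2 * π),
      |kernel ξ θ φ| ≤ M ∧ |defectKernel ξ θ φ| ≤ M := by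
  obtain ⟨L, hL0, hderiv, hlip⟩ := exists_abs_derivIcc_le_and_lipschitz hC1
  obtain ⟨C, hC0, hC⟩ := exists_versin_le_and_abs_defect_le hL0
  have hpair : ∀ θ ∈ Icc 0 (2 * π), ∀ φ ∈ Icc 0 (2 * π),
      versin (extIcc ξ θ - extIcc ξ φ) ≤ C * versin (θ - φ) ∧
      |defect (extIcc ξ θ - extIcc ξ φ) (θ - φ)| ≤ C * versin (θ - φ) ^ 2 := by
    intro θ hθ φ hφ
    wlog hφθ : φ ≤ θ generalizing θ φ
    · rw [← versin_neg, ← versin_neg (θ - φ), ← defect_neg_neg, neg_sub, neg_sub]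
      exact this φ hφ θ hθ (le_of_not_ge hφθ)
    have h0 : (0 : ℝ) ∈ Icc 0 (2 * π) := ⟨le_rfl, two_pi_pos.le⟩
    have h2π : 2 * π ∈ Icc 0 (2 * π) := ⟨two_pi_pos.le, le_rfl⟩
    have hlip' (x y : ℝ) (hx : x ∈ Icc 0 (2 * π)) (hy : y ∈ Icc 0 (2 * π)) (hxy : x ≤ y) :
        ξ y - ξ x ≤ L * (y - x) := by
      simpa [extIcc_of_mem, hx, hy, abs_of_nonneg (sub_nonneg.2 hxy)] using
        (le_abs_self _).trans (hlip y x)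
    have hC := hC _ (sub_mem_Icc_of_monotoneOn hmono hdeg hφ hθ hφθ) (θ - φ)
      ⟨sub_nonneg.2 hφθ, by linarith [hθ.2, hφ.1]⟩ (hlip' φ θ hφ hθ hφθ)
      (by linarith [hlip' 0 φ h0 hφ hφ.1, hlip' θ (2 * π) hθ h2π hθ.2])
    rwa [extIcc_of_mem hθ, extIcc_of_mem hφ]
  refine ⟨C * (L + 1), fun θ hθ φ hφ => ⟨?_, ?_⟩⟩
  · rw [kernel, abs_mul, abs_div, abs_of_nonneg (versin_nonneg _), abs_of_nonneg (versin_nonneg _)]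
    refine mul_le_mul (div_le_of_le_mul₀ (versin_nonneg _) hC0 (hpair θ hθ φ hφ).1) ?_
      (abs_nonneg _) hC0
    linarith [abs_sub (derivIcc ξ θ) 1, hderiv θ, abs_one (α := ℝ)]
  · rw [defectKernel, abs_div, abs_of_nonneg (sq_nonneg (versin (θ - φ)))]
    exact (div_le_of_le_mul₀ (sq_nonneg _) hC0 (hpair θ hθ φ hφ).2).trans
      (le_mul_of_one_le_right hC0 (by linarith))

lemma measurable_kernel (hC1 : ContDiffOn ℝ 1 ξ (Icc 0 (2 * π))) :
    Measurable fun p : ℝ × ℝ => kernel ξ p.1 p.2 := by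
  have := continuous_extIcc hC1.continuousOn
  have := continuous_derivIcc hC1
  unfold kernel
  fun_prop

lemma measurable_defectKernel (hξ : ContinuousOn ξ (Icc 0 (2 * π))) :
    Measurable fun p : ℝ × ℝ => defectKernel ξ p.1 p.2 := by
  have := continuous_extIcc hξ
  unfold defectKernel
  fun_prop

lemma continuousAt_defectKernel (hξ : ContinuousOn ξ (Icc 0 (2 * π))) {p : ℝ × ℝ}
    (hp : versin (p.1 - p.2) ≠ 0) : ContinuousAt (fun p : ℝ × ℝ => defectKernel ξ p.1 p.2) p := by
  have := continuous_extIcc hξ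
  unfold defectKernel
  fun_prop (disch := exact pow_ne_zero 2 hp)

lemma hasDerivAt_kernelPrimitive (hξ : DifferentiableOn ℝ ξ (Icc 0 (2 * π))) {φ θ : ℝ}
    (hθ : θ ∈ Ioo 0 (2 * π)) (hφθ : versin (θ - φ) ≠ 0) :
    HasDerivAt (kernelPrimitive ξ φ) (kernel ξ θ φ - defectKernel ξ θ φ) θ := by
  have hΔξ := (hasDerivAt_antiVersin _).comp θ ((hasDerivAt_extIcc hξ hθ).sub_const (extIcc ξ φ))
  have hΔ := (hasDerivAt_antiVersin _).comp θ ((hasDerivAt_id θ).sub_const φ)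
  have hden := (hasDerivAt_versin _).comp θ ((hasDerivAt_id θ).sub_const φ)
  refine ((hΔξ.sub hΔ).div hden hφθ).congr_deriv ?_
  simp only [kernel, defectKernel, defect, Pi.sub_apply, Function.comp_apply, id, mul_one]
  field_simp
  ring

lemma kernelPrimitive_self (φ : ℝ) : kernelPrimitive ξ φ φ = 0 := by
  simp [kernelPrimitive]

lemma kernelPrimitive_two_pi (hdeg : ξ (2 * π) = ξ 0 + 2 * π) (φ : ℝ) :
    kernelPrimitive ξ φ (2 * π) = kernelPrimitive ξ φ 0 := by
  have hext : extIcc ξ (2 * π) = extIcc ξ 0 + 2 * π := by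
    rw [extIcc_of_mem ⟨two_pi_pos.le, le_rfl⟩, extIcc_of_mem ⟨le_rfl, two_pi_pos.le⟩, hdeg]
  rw [kernelPrimitive, kernelPrimitive, hext, show 2 * π - φ = 0 - φ + 2 * π by ring,
    show extIcc ξ 0 + 2 * π - extIcc ξ φ = extIcc ξ 0 - extIcc ξ φ + 2 * π by ring,
    antiVersin_add_two_pi, antiVersin_add_two_pi, versin_add_two_pi, add_sub_add_right_eq_sub]

lemma tendsto_kernelPrimitive_self (hC1 : ContDiffOn ℝ 1 ξ (Icc 0 (2 * π))) (φ : ℝ) :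
    Filter.Tendsto (kernelPrimitive ξ φ) (nhds φ) (nhds 0) := by
  obtain ⟨L, hL0, -, hlip⟩ := exists_abs_derivIcc_le_and_lipschitz hC1
  have hbound (θ : ℝ) (hθ : |θ - φ| ≤ π) :
      |kernelPrimitive ξ φ θ| ≤ (L ^ 3 + 1) * π ^ 2 / 12 * |θ - φ| := by
    have hΔ := sq_le_pi_sq_div_two_mul_versin hθ
    have hΔξ : |extIcc ξ θ - extIcc ξ φ| ^ 3 ≤ L ^ 3 * |θ - φ| ^ 3 := by
      simpa [mul_pow] using pow_le_pow_left₀ (abs_nonneg _) (hlip θ φ) 3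
    have hnum : |antiVersin (extIcc ξ θ - extIcc ξ φ) - antiVersin (θ - φ)| ≤
        (L ^ 3 + 1) * |θ - φ| ^ 3 / 6 := by
      linarith [abs_sub (antiVersin (extIcc ξ θ - extIcc ξ φ)) (antiVersin (θ - φ)),
        abs_antiVersin_le (extIcc ξ θ - extIcc ξ φ), abs_antiVersin_le (θ - φ)]
    rw [kernelPrimitive, abs_div, abs_of_nonneg (versin_nonneg _)]
    refine div_le_of_le_mul₀ (versin_nonneg _) (by positivity) (hnum.trans ?_)
    calc (L ^ 3 + 1) * |θ - φ| ^ 3 / 6 = (L ^ 3 + 1) / 6 * |θ - φ| * (θ - φ) ^ 2 := by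
          rw [← sq_abs (θ - φ)]; ring
      _ ≤ (L ^ 3 + 1) / 6 * |θ - φ| * (π ^ 2 / 2 * versin (θ - φ)) := by gcongr
      _ = _ := by ring
  refine squeeze_zero_norm' (a := fun θ => (L ^ 3 + 1) * π ^ 2 / 12 * |θ - φ|) ?_ ?_
  · filter_upwards [Metric.closedBall_mem_nhds φ pi_pos] with θ hθ
    exact hbound θ hθ
  · simpa using ((continuous_id.sub continuous_const).abs.const_mul _).tendsto' φ _ (by simp)

lemma continuousOn_kernelPrimitive (hC1 : ContDiffOn ℝ 1 ξ (Icc 0 (2 * π))) {φ : ℝ}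
    (hφ : φ ∈ Ioo 0 (2 * π)) : ContinuousOn (kernelPrimitive ξ φ) (Icc 0 (2 * π)) := by
  intro θ hθ
  refine ContinuousAt.continuousWithinAt ?_
  rcases eq_or_ne θ φ with rfl | hne
  · rw [ContinuousAt, kernelPrimitive_self]
    exact tendsto_kernelPrimitive_self hC1 θ
  · have := continuous_extIcc hC1.continuousOn
    have hv := versin_sub_ne_zero hθ hφ hne
    unfold kernelPrimitive
    fun_prop (disch := exact hv)

lemma intervalIntegrable_of_abs_le {f : ℝ → ℝ} (hf : Measurable f) {a b M : ℝ} (hab : a ≤ b)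
    (hM : ∀ x ∈ Ioc a b, |f x| ≤ M) : IntervalIntegrable f volume a b :=
  (intervalIntegrable_iff_integrableOn_Ioc_of_le hab).2 <|
    Measure.integrableOn_of_bounded measure_Ioc_lt_top.ne hf.aestronglyMeasurable
      (ae_restrict_of_forall_mem measurableSet_Ioc hM)

lemma integral_kernel_eq_integral_defectKernel (hC1 : ContDiffOn ℝ 1 ξ (Icc 0 (2 * π)))
    (hmono : MonotoneOn ξ (Icc 0 (2 * π))) (hdeg : ξ (2 * π) = ξ 0 + 2 * π) {φ : ℝ}
    (hφ : φ ∈ Ioo 0 (2 * π)) :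
    ∫ θ in (0 : ℝ)..2 * π, kernel ξ θ φ = ∫ θ in (0 : ℝ)..2 * π, defectKernel ξ θ φ := by
  obtain ⟨M, hM⟩ := exists_abs_kernel_le hC1 hmono hdeg
  have hφ' := Ioo_subset_Icc_self hφ
  have hker : IntervalIntegrable (kernel ξ · φ) volume 0 (2 * π) :=
    intervalIntegrable_of_abs_le ((measurable_kernel hC1).comp measurable_prodMk_right)
      two_pi_pos.le fun θ hθ => (hM θ (Ioc_subset_Icc_self hθ) φ hφ').1
  have hdef : IntervalIntegrable (defectKernel ξ · φ) volume 0 (2 * π) :=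
    intervalIntegrable_of_abs_le ((measurable_defectKernel hC1.continuousOn).comp
      measurable_prodMk_right) two_pi_pos.le fun θ hθ => (hM θ (Ioc_subset_Icc_self hθ) φ hφ').2
  have hint {a b : ℝ} (ha : 0 ≤ a) (hb : b ≤ 2 * π) (hab : a ≤ b) :
      IntervalIntegrable (fun θ => kernel ξ θ φ - defectKernel ξ θ φ) volume a b :=
    (hker.sub hdef).mono_set (by rw [uIcc_of_le hab, uIcc_of_le two_pi_pos.le]; gcongr)
  have ftc {a b : ℝ} (ha : 0 ≤ a) (hb : b ≤ 2 * π) (hab : a ≤ b) (hφab : φ ∉ Ioo a b) :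
      ∫ θ in a..b, (kernel ξ θ φ - defectKernel ξ θ φ) =
        kernelPrimitive ξ φ b - kernelPrimitive ξ φ a := by
    refine intervalIntegral.integral_eq_sub_of_hasDeriv_right_of_le hab
      ((continuousOn_kernelPrimitive hC1 hφ).mono (Icc_subset_Icc ha hb)) (fun θ hθ => ?_)
      (hint ha hb hab)
    have hθ' : θ ∈ Ioo 0 (2 * π) := ⟨ha.trans_lt hθ.1, hθ.2.trans_le hb⟩
    refine (hasDerivAt_kernelPrimitive (hC1.differentiableOn one_ne_zero) hθ' ?_).hasDerivWithinAt
    exact versin_sub_ne_zero (Ioo_subset_Icc_self hθ') hφ fun h => hφab (h ▸ hθ)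
  rw [← sub_eq_zero, ← intervalIntegral.integral_sub hker hdef,
    ← intervalIntegral.integral_add_adjacent_intervals (hint le_rfl hφ'.2 hφ'.1)
      (hint hφ'.1 le_rfl hφ'.2),
    ftc le_rfl hφ'.2 hφ'.1 (fun h => h.2.false), ftc hφ'.1 le_rfl hφ'.2 (fun h => h.1.false),
    kernelPrimitive_two_pi hdeg]
  ring

lemma integrableOn_Ioo_prod_Ioo_of_abs_le {f : ℝ × ℝ → ℝ} (hf : Measurable f) {a b M : ℝ}
    (hM : ∀ p ∈ Ioo a b ×ˢ Ioo a b, |f p| ≤ M) : IntegrableOn f (Ioo a b ×ˢ Ioo a b) :=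
  Measure.integrableOn_of_bounded
    ((Metric.isBounded_Ioo a b).prod (Metric.isBounded_Ioo a b)).measure_lt_top.ne
    hf.aestronglyMeasurable
    (ae_restrict_of_forall_mem (measurableSet_Ioo.prod measurableSet_Ioo) hM)

lemma integrableOn_defectKernel (hC1 : ContDiffOn ℝ 1 ξ (Icc 0 (2 * π)))
    (hmono : MonotoneOn ξ (Icc 0 (2 * π))) (hdeg : ξ (2 * π) = ξ 0 + 2 * π) :
    IntegrableOn (fun p : ℝ × ℝ => defectKernel ξ p.1 p.2) (Ioo 0 (2 * π) ×ˢ Ioo 0 (2 * π)) := by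
  obtain ⟨M, hM⟩ := exists_abs_kernel_le hC1 hmono hdeg
  exact integrableOn_Ioo_prod_Ioo_of_abs_le (measurable_defectKernel hC1.continuousOn) fun p hp =>
    (hM _ (Ioo_subset_Icc_self hp.1) _ (Ioo_subset_Icc_self hp.2)).2

lemma integral_integral_eq_setIntegral_defectKernel (hC1 : ContDiffOn ℝ 1 ξ (Icc 0 (2 * π)))
    (hmono : MonotoneOn ξ (Icc 0 (2 * π))) (hdeg : ξ (2 * π) = ξ 0 + 2 * π) :
    (∫ θ in (0:ℝ)..(2 * π), ∫ φ in (0:ℝ)..(2 * π),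
        (1 - Real.cos (ξ θ - ξ φ)) / (1 - Real.cos (θ - φ)) * (deriv ξ θ - 1)) =
      ∫ p in Ioo 0 (2 * π) ×ˢ Ioo 0 (2 * π), defectKernel ξ p.1 p.2 := by
  set I := Ioo (0 : ℝ) (2 * π)
  obtain ⟨M, hM⟩ := exists_abs_kernel_le hC1 hmono hdeg
  have hprod : (volume.restrict I).prod (volume.restrict I) = volume.restrict (I ×ˢ I) := by
    rw [Measure.prod_restrict, ← Measure.volume_eq_prod]
  have hkernel : Integrable (Function.uncurry (kernel ξ))
      ((volume.restrict I).prod (volume.restrict I)) := by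
    rw [hprod]
    exact integrableOn_Ioo_prod_Ioo_of_abs_le (measurable_kernel hC1) fun p hp =>
      (hM _ (Ioo_subset_Icc_self hp.1) _ (Ioo_subset_Icc_self hp.2)).1
  have hdefect : Integrable (fun p : ℝ × ℝ => defectKernel ξ p.1 p.2)
      ((volume.restrict I).prod (volume.restrict I)) := by
    rw [hprod]
    exact integrableOn_defectKernel hC1 hmono hdeg
  have hI (f : ℝ → ℝ) : ∫ x in (0 : ℝ)..2 * π, f x = ∫ x in I, f x := by
    rw [intervalIntegral.integral_of_le two_pi_pos.le, integral_Ioc_eq_integral_Ioo]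
  calc _ = ∫ θ in I, ∫ φ in I, kernel ξ θ φ := by
        rw [hI]
        refine setIntegral_congr_fun measurableSet_Ioo fun θ hθ => ?_
        rw [hI]
        refine setIntegral_congr_fun measurableSet_Ioo fun φ hφ => ?_
        simp only [kernel, versin, extIcc_of_mem (Ioo_subset_Icc_self hθ),
          extIcc_of_mem (Ioo_subset_Icc_self hφ), derivIcc_of_mem_Ioo hθ]
    _ = ∫ φ in I, ∫ θ in I, kernel ξ θ φ := integral_integral_swap hkernel
    _ = ∫ φ in I, ∫ θ in I, defectKernel ξ θ φ :=
        setIntegral_congr_fun measurableSet_Ioo fun φ hφ => by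
          simpa only [hI] using integral_kernel_eq_integral_defectKernel hC1 hmono hdeg hφ
    _ = _ := by rw [← integral_prod_symm _ hdefect, hprod]

lemma exists_eq_add_const_of_defectKernel_ae_eq_zero (hC1 : ContDiffOn ℝ 1 ξ (Icc 0 (2 * π)))
    (hmono : MonotoneOn ξ (Icc 0 (2 * π))) (hdeg : ξ (2 * π) = ξ 0 + 2 * π)
    (h : (fun p : ℝ × ℝ => defectKernel ξ p.1 p.2)
      =ᵐ[volume.restrict (Ioo 0 (2 * π) ×ˢ Ioo 0 (2 * π))] 0) :
    ∃ c, ∀ θ ∈ Icc 0 (2 * π), ξ θ = θ + c := by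
  set I := Ioo (0 : ℝ) (2 * π)
  set U := (I ×ˢ I) ∩ {p | p.1 ≠ p.2}
  have hU : IsOpen U :=
    (isOpen_Ioo.prod isOpen_Ioo).inter (isOpen_ne_fun continuous_fst continuous_snd)
  have hzero : EqOn (fun p : ℝ × ℝ => defectKernel ξ p.1 p.2) 0 U :=
    Measure.eqOn_open_of_ae_eq (ae_restrict_of_ae_restrict_of_subset inter_subset_left h) hU
      (fun p hp => (continuousAt_defectKernel hC1.continuousOn
        (versin_sub_ne_zero (Ioo_subset_Icc_self hp.1.1) hp.1.2 hp.2)).continuousWithinAt)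
      continuousOn_const
  have hπ : π ∈ I := ⟨pi_pos, by linarith [pi_pos]⟩
  have hIoo : EqOn ξ (· + (ξ π - π)) I := by
    intro θ hθ
    rcases eq_or_ne θ π with rfl | hne
    · ring
    have hv := versin_sub_ne_zero (Ioo_subset_Icc_self hθ) hπ hne
    have := hzero (show (θ, π) ∈ U from ⟨⟨hθ, hπ⟩, hne⟩)
    simp only [defectKernel, Pi.zero_apply, div_eq_zero_iff, hv, pow_eq_zero_iff, ne_eq,
      OfNat.ofNat_ne_zero, not_false_eq_true, or_false, extIcc_of_mem (Ioo_subset_Icc_self hθ),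
      extIcc_of_mem (Ioo_subset_Icc_self hπ)] at this
    linarith [eq_of_defect_eq_zero hmono hdeg hθ hπ this]
  exact ⟨ξ π - π, hIoo.of_subset_closure hC1.continuousOn (by fun_prop) Ioo_subset_Icc_self
    (closure_Ioo two_pi_pos.ne).ge⟩

lemma defectKernel_eq_zero_of_eq_add_const {c : ℝ} (hc : ∀ θ ∈ Icc 0 (2 * π), ξ θ = θ + c)
    {θ φ : ℝ} (hθ : θ ∈ Icc 0 (2 * π)) (hφ : φ ∈ Icc 0 (2 * π)) : defectKernel ξ θ φ = 0 := by
  rw [defectKernel, extIcc_of_mem hθ, extIcc_of_mem hφ, hc θ hθ, hc φ hφ,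
    add_sub_add_right_eq_sub, defect_self, zero_div]

end Kernels

end

theorem stmt5 (ξ : ℝ → ℝ) (hC1 : ContDiffOn ℝ 1 ξ (Set.Icc 0 (2 * π)))
    (hmono : MonotoneOn ξ (Set.Icc 0 (2 * π)))
    (hdeg : ξ (2 * π) = ξ 0 + 2 * π) :
    0 ≤ (∫ θ in (0:ℝ)..(2 * π), ∫ φ in (0:ℝ)..(2 * π),
          (1 - Real.cos (ξ θ - ξ φ)) / (1 - Real.cos (θ - φ)) * (deriv ξ θ - 1)) ∧
    ((∫ θ in (0:ℝ)..(2 * π), ∫ φ in (0:ℝ)..(2 * π),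
          (1 - Real.cos (ξ θ - ξ φ)) / (1 - Real.cos (θ - φ)) * (deriv ξ θ - 1)) = 0 ↔
      ∃ c : ℝ, ∀ θ ∈ Set.Icc (0:ℝ) (2 * π), ξ θ = θ + c) := by
  have hsquare : MeasurableSet (Ioo (0 : ℝ) (2 * π) ×ˢ Ioo 0 (2 * π)) :=
    measurableSet_Ioo.prod measurableSet_Ioo
  have hnonneg : ∀ p ∈ Ioo (0 : ℝ) (2 * π) ×ˢ Ioo 0 (2 * π), 0 ≤ defectKernel ξ p.1 p.2 :=
    fun p hp => defectKernel_nonneg hmono hdeg (Ioo_subset_Icc_self hp.1) (Ioo_subset_Icc_self hp.2)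
  rw [integral_integral_eq_setIntegral_defectKernel hC1 hmono hdeg,
    setIntegral_eq_zero_iff_of_nonneg_ae (ae_restrict_of_forall_mem hsquare hnonneg)
      (integrableOn_defectKernel hC1 hmono hdeg)]
  refine ⟨setIntegral_nonneg hsquare hnonneg,
    exists_eq_add_const_of_defectKernel_ae_eq_zero hC1 hmono hdeg, fun ⟨c, hc⟩ => ?_⟩
  exact ae_restrict_of_forall_mem hsquare fun p hp => defectKernel_eq_zero_of_eq_add_const hc
    (Ioo_subset_Icc_self hp.1) (Ioo_subset_Icc_self hp.2)
end

section
/- For every integer n ≥ 2 and every real ρ ≥ √7, the coefficient B_n = ρ^(−2n) − (n/4)(ρ + ρ⁻¹)² + 2n + (n/2)(ρ² − 4 − ρ⁻²) satisfies B_n ≥ n·ρ²/7. -/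
/-!
Expanding `(ρ + ρ⁻¹)² = ρ² + 2 + ρ⁻²` collapses the three polynomial terms to
`n (ρ²/4 - 1/2 - 3/(4ρ²))`, and `ρ^(-2n) ≥ 0` may be dropped. With `x = ρ² ≥ 7` the remaining
claim `x/7 ≤ x/4 - 1/2 - 3/(4x)` is the quadratic inequality `3x² - 14x - 21 ≥ 0`.
-/

lemma coeff_polynomial_part_eq (n ρ : ℝ) (hρ : ρ ≠ 0) :
    -((n / 4) * (ρ + ρ⁻¹) ^ 2) + 2 * n + (n / 2) * (ρ ^ 2 - 4 - (ρ ^ 2)⁻¹) =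
      n * (ρ ^ 2 / 4 - 1 / 2 - (3 / 4) * (ρ ^ 2)⁻¹) := by
  field_simp
  ring

lemma div_seven_le_of_seven_le {x : ℝ} (hx : 7 ≤ x) :
    x / 7 ≤ x / 4 - 1 / 2 - (3 / 4) * x⁻¹ := by
  have hx0 : 0 < x := by linarith
  rw [← sub_nonneg]
  have h : x / 4 - 1 / 2 - (3 / 4) * x⁻¹ - x / 7 = (3 * x ^ 2 - 14 * x - 21) / (28 * x) := by
    field_simp
    ring
  rw [h]
  apply div_nonneg _ (by positivity)
  nlinarith

theorem stmt8_general (n : ℕ) (ρ : ℝ) (hρ : Real.sqrt 7 ≤ ρ) :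
    (n : ℝ) * ρ ^ 2 / 7 ≤
      ρ ^ (-(2 * (n : ℤ))) - ((n : ℝ) / 4) * (ρ + ρ⁻¹) ^ 2 + 2 * n +
        ((n : ℝ) / 2) * (ρ ^ 2 - 4 - (ρ ^ 2)⁻¹) := by
  obtain ⟨hρ0, hρ7⟩ := Real.sqrt_le_iff.mp hρ
  have hρne : ρ ≠ 0 := by rintro rfl; norm_num at hρ7
  have hzpow : 0 ≤ ρ ^ (-(2 * (n : ℤ))) := zpow_nonneg hρ0 _
  have hmain := mul_le_mul_of_nonneg_left (div_seven_le_of_seven_le hρ7) n.cast_nonneg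
  linarith [coeff_polynomial_part_eq n ρ hρne]

theorem stmt8 (n : ℕ) (hn : 2 ≤ n) (ρ : ℝ) (hρ : Real.sqrt 7 ≤ ρ) :
    (n : ℝ) * ρ ^ 2 / 7 ≤
      ρ ^ (-(2 * (n : ℤ))) - ((n : ℝ) / 4) * (ρ + ρ⁻¹) ^ 2 + 2 * n +
        ((n : ℝ) / 2) * (ρ ^ 2 - 4 - (ρ ^ 2)⁻¹) :=
  stmt8_general n ρ hρ
end

section
/- For ρ ≥ √7, define A₂ = ρ⁴ − (1/2)(ρ+ρ⁻¹)² − 4 − 3(ρ² − 4 − ρ⁻²), B₂ = ρ⁻⁴ − (1/2)(ρ+ρ⁻¹)² + 4 + (ρ² − 4 − ρ⁻²), C₂ = 1 − (1/2)(ρ+ρ⁻¹)² − (ρ² − 4 − ρ⁻²). Then A₂ > 0, B₂ > 0, and A₂·B₂ > C₂². -/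
/-! In the variable `t = ρ²` the three coefficients are rational functions with denominators
`2t`, `2t²` and `2t`, so all three claims reduce to polynomial inequalities in `t`, which hold
as soon as `t ≥ 3`. -/

namespace NitscheQuadraticForm

noncomputable def A₂ (ρ : ℝ) : ℝ := ρ ^ 4 - (1 / 2) * (ρ + ρ⁻¹) ^ 2 - 4 - 3 * (ρ ^ 2 - 4 - (ρ ^ 2)⁻¹)

noncomputable def B₂ (ρ : ℝ) : ℝ := (ρ ^ 4)⁻¹ - (1 / 2) * (ρ + ρ⁻¹) ^ 2 + 4 + (ρ ^ 2 - 4 - (ρ ^ 2)⁻¹)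

noncomputable def C₂ (ρ : ℝ) : ℝ := 1 - (1 / 2) * (ρ + ρ⁻¹) ^ 2 - (ρ ^ 2 - 4 - (ρ ^ 2)⁻¹)

section Polynomials

variable {t : ℝ}

lemma numA_pos (ht : 0 ≤ t) : 0 < 2 * t ^ 3 - 7 * t ^ 2 + 14 * t + 5 := by
  nlinarith [mul_nonneg ht (sq_nonneg (t - 7 / 4))]

lemma numB_pos (ht : 3 ≤ t) : 0 < t ^ 3 - 2 * t ^ 2 - 3 * t + 2 := by
  nlinarith [mul_nonneg (sub_nonneg.mpr ht) (sq_nonneg t)]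

lemma numC_sq_lt_numA_mul_numB (ht : 3 ≤ t) :
    t * (-3 * t ^ 2 + 8 * t + 1) ^ 2 <
      (2 * t ^ 3 - 7 * t ^ 2 + 14 * t + 5) * (t ^ 3 - 2 * t ^ 2 - 3 * t + 2) := by
  nlinarith [mul_nonneg (sub_nonneg.mpr ht) (sq_nonneg t)]

end Polynomials

section Coefficients

variable {ρ : ℝ}

lemma ne_zero_of_three_le_sq (hρ : 3 ≤ ρ ^ 2) : ρ ≠ 0 := by
  rintro rfl; norm_num at hρ

lemma A₂_eq (hρ : ρ ≠ 0) :
    A₂ ρ = (2 * (ρ ^ 2) ^ 3 - 7 * (ρ ^ 2) ^ 2 + 14 * ρ ^ 2 + 5) / (2 * ρ ^ 2) := by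
  unfold A₂; field_simp; ring

lemma B₂_eq (hρ : ρ ≠ 0) :
    B₂ ρ = ((ρ ^ 2) ^ 3 - 2 * (ρ ^ 2) ^ 2 - 3 * ρ ^ 2 + 2) / (2 * (ρ ^ 2) ^ 2) := by
  unfold B₂; field_simp; ring

lemma C₂_eq (hρ : ρ ≠ 0) :
    C₂ ρ = (-3 * (ρ ^ 2) ^ 2 + 8 * ρ ^ 2 + 1) / (2 * ρ ^ 2) := by
  unfold C₂; field_simp; ring

lemma A₂_pos (hρ : ρ ≠ 0) : 0 < A₂ ρ := by
  rw [A₂_eq hρ]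
  have := numA_pos (sq_nonneg ρ)
  positivity

lemma B₂_pos (hρ : 3 ≤ ρ ^ 2) : 0 < B₂ ρ := by
  have hρ₀ := ne_zero_of_three_le_sq hρ
  rw [B₂_eq hρ₀]
  have := numB_pos hρ
  positivity

lemma C₂_sq_lt_A₂_mul_B₂ (hρ : 3 ≤ ρ ^ 2) : C₂ ρ ^ 2 < A₂ ρ * B₂ ρ := by
  have hρ₀ := ne_zero_of_three_le_sq hρ
  rw [A₂_eq hρ₀, B₂_eq hρ₀, C₂_eq hρ₀, div_mul_div_comm, div_pow,
    div_lt_div_iff₀ (by positivity) (by positivity)]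
  have key := numC_sq_lt_numA_mul_numB hρ
  calc (-3 * (ρ ^ 2) ^ 2 + 8 * ρ ^ 2 + 1) ^ 2 * (2 * ρ ^ 2 * (2 * (ρ ^ 2) ^ 2))
      = 4 * (ρ ^ 2) ^ 2 * (ρ ^ 2 * (-3 * (ρ ^ 2) ^ 2 + 8 * ρ ^ 2 + 1) ^ 2) := by ring
    _ < 4 * (ρ ^ 2) ^ 2 * ((2 * (ρ ^ 2) ^ 3 - 7 * (ρ ^ 2) ^ 2 + 14 * ρ ^ 2 + 5) *
          ((ρ ^ 2) ^ 3 - 2 * (ρ ^ 2) ^ 2 - 3 * ρ ^ 2 + 2)) := by gcongr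
    _ = _ := by ring

end Coefficients

end NitscheQuadraticForm

open NitscheQuadraticForm in
theorem stmt10 (ρ : ℝ) (hρ : Real.sqrt 7 ≤ ρ) :
    0 < ρ ^ 4 - (1 / 2) * (ρ + ρ⁻¹) ^ 2 - 4 - 3 * (ρ ^ 2 - 4 - (ρ ^ 2)⁻¹) ∧
    0 < (ρ ^ 4)⁻¹ - (1 / 2) * (ρ + ρ⁻¹) ^ 2 + 4 + (ρ ^ 2 - 4 - (ρ ^ 2)⁻¹) ∧
    (1 - (1 / 2) * (ρ + ρ⁻¹) ^ 2 - (ρ ^ 2 - 4 - (ρ ^ 2)⁻¹)) ^ 2 <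
      (ρ ^ 4 - (1 / 2) * (ρ + ρ⁻¹) ^ 2 - 4 - 3 * (ρ ^ 2 - 4 - (ρ ^ 2)⁻¹)) *
        ((ρ ^ 4)⁻¹ - (1 / 2) * (ρ + ρ⁻¹) ^ 2 + 4 + (ρ ^ 2 - 4 - (ρ ^ 2)⁻¹)) := by
  have hsq : 3 ≤ ρ ^ 2 := by
    have : 7 ≤ ρ ^ 2 := (Real.sqrt_le_left ((Real.sqrt_nonneg 7).trans hρ)).mp hρ
    linarith
  exact ⟨A₂_pos (ne_zero_of_three_le_sq hsq), B₂_pos hsq, C₂_sq_lt_A₂_mul_B₂ hsq⟩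
end

section
/- For every integer n ≥ 3 and every real ρ ≥ √7: ρ^(2n) − (n² − n/4)·ρ² > 7·(1/2 − 1/(4n))²·n³·ρ². -/
/-
Put `x = ρ²`, so `x ≥ 7` and `ρ^(2n) = x^n ≥ 7^(n-1) x`. The coefficient of `x` on the
other side simplifies to `n (28n² - 12n + 3) / 16 ≤ 7n³/4`, and `7n³/4 < 7^(n-1)` for
`n ≥ 3` because `n³ / 7^(n-1)` decreases from `n = 3` on, where `7 · 27 < 4 · 49`.
-/

theorem seven_mul_cube_lt_four_mul_seven_pow {n : ℕ} (hn : 3 ≤ n) :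
    7 * n ^ 3 < 4 * 7 ^ (n - 1) := by
  induction n, hn using Nat.le_induction with
  | base => norm_num
  | succ m hm ih =>
    have hcube : (m + 1) ^ 3 ≤ 7 * m ^ 3 := by nlinarith [Nat.mul_le_mul hm hm]
    calc 7 * (m + 1) ^ 3 ≤ 7 * (7 * m ^ 3) := Nat.mul_le_mul_left 7 hcube
      _ < 7 * (4 * 7 ^ (m - 1)) := Nat.mul_lt_mul_of_pos_left ih (by norm_num)
      _ = 4 * 7 ^ (m + 1 - 1) := by
        rw [Nat.add_sub_cancel, ← mul_pow_sub_one (by omega : m ≠ 0) 7]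
        ring

theorem coeff_le_seven_mul_cube_div_four {n : ℝ} (hn : 1 ≤ n) :
    7 * (1 / 2 - 1 / (4 * n)) ^ 2 * n ^ 3 + (n ^ 2 - n / 4) ≤ 7 * n ^ 3 / 4 := by
  have hsimp : 7 * (1 / 2 - 1 / (4 * n)) ^ 2 * n ^ 3 + (n ^ 2 - n / 4)
      = 7 * n ^ 3 / 4 - n * (12 * n - 3) / 16 := by
    field_simp
    ring
  rw [hsimp]
  nlinarith

theorem pow_mul_le_pow_succ {R : Type*} [Semiring R] [PartialOrder R] [IsOrderedRing R]
    {a x : R} (ha : 0 ≤ a) (hax : a ≤ x) (n : ℕ) :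
    a ^ n * x ≤ x ^ (n + 1) :=
  pow_succ x n ▸ mul_le_mul_of_nonneg_right (pow_le_pow_left₀ ha hax n) (ha.trans hax)

theorem stmt11 (n : ℕ) (hn : 3 ≤ n) (ρ : ℝ) (hρ : Real.sqrt 7 ≤ ρ) :
    7 * (1 / 2 - 1 / (4 * (n : ℝ))) ^ 2 * (n : ℝ) ^ 3 * ρ ^ 2 <
      ρ ^ (2 * n) - ((n : ℝ) ^ 2 - (n : ℝ) / 4) * ρ ^ 2 := by
  have hρ2 : (7 : ℝ) ≤ ρ ^ 2 := by
    simpa using pow_le_pow_left₀ (Real.sqrt_nonneg 7) hρ 2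
  have hpow : (7 : ℝ) ^ (n - 1) * ρ ^ 2 ≤ ρ ^ (2 * n) := by
    rw [pow_mul, show n = n - 1 + 1 by omega]
    simpa using pow_mul_le_pow_succ (by norm_num) hρ2 (n - 1)
  have hcube : 7 * (n : ℝ) ^ 3 / 4 < 7 ^ (n - 1) := by
    have hnat := seven_mul_cube_lt_four_mul_seven_pow hn
    rw [div_lt_iff₀ (by norm_num)]
    exact_mod_cast (by omega : 7 * n ^ 3 < 7 ^ (n - 1) * 4)
  suffices (7 * (1 / 2 - 1 / (4 * (n : ℝ))) ^ 2 * n ^ 3 + (n ^ 2 - n / 4)) * ρ ^ 2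
      < ρ ^ (2 * n) by linarith
  have hn1 : (1 : ℝ) ≤ n := by exact_mod_cast (by omega : 1 ≤ n)
  calc _ ≤ 7 * (n : ℝ) ^ 3 / 4 * ρ ^ 2 :=
        mul_le_mul_of_nonneg_right (coeff_le_seven_mul_cube_div_four hn1) (by positivity)
    _ < 7 ^ (n - 1) * ρ ^ 2 := by gcongr
    _ ≤ ρ ^ (2 * n) := hpow
end

section
/- For every integer m ≥ 2 and every real ρ ≥ √7, B₋ₘ = ρ^(2m) + (m/4)(ρ + ρ⁻¹)² − 2m + ((2m² + m)/2)(ρ² − 4 − ρ⁻²) satisfies B₋ₘ > (49/48)·m³·ρ². -/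
/-!
Writing `x = ρ²`, the quantity is `B x = x ^ m + (m² + 3m/4) x - (4m² + 7m/2) - (m² + m/4) / x`,
and `B x / x` is increasing in `x`. So it suffices to check `B 7 / 7 > 49 m³ / 48`, i.e.
`7 ^ (m - 1) + (20 m² + 12 m) / 49 > 49 m³ / 48`: for `m = 2` by computation, and for `m ≥ 3`
already `48 · 7 ^ (m - 1) ≥ 49 m³`, by induction.
-/

/-- The coefficient `B₋ₘ` as a function of `x = ρ²`. -/
noncomputable def coeffB (m : ℕ) (x : ℝ) : ℝ :=
  x ^ m + ((m : ℝ) ^ 2 + 3 * m / 4) * x - (4 * (m : ℝ) ^ 2 + 7 * m / 2) - ((m : ℝ) ^ 2 + m / 4) / x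

lemma coeffB_sq (m : ℕ) {ρ : ℝ} (hρ : ρ ≠ 0) :
    ρ ^ (2 * m) + ((m : ℝ) / 4) * (ρ + ρ⁻¹) ^ 2 - 2 * m +
        ((2 * (m : ℝ) ^ 2 + m) / 2) * (ρ ^ 2 - 4 - (ρ ^ 2)⁻¹) = coeffB m (ρ ^ 2) := by
  rw [coeffB, pow_mul]
  field_simp
  ring

lemma coeffB_div_self {m : ℕ} (hm : m ≠ 0) {x : ℝ} (hx : x ≠ 0) :
    coeffB m x / x = x ^ (m - 1) + ((m : ℝ) ^ 2 + 3 * m / 4)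
      - (4 * (m : ℝ) ^ 2 + 7 * m / 2) / x - ((m : ℝ) ^ 2 + m / 4) / x ^ 2 := by
  rw [coeffB, ← pow_sub_one_mul hm x]
  field_simp

lemma coeffB_div_self_monotoneOn {m : ℕ} (hm : m ≠ 0) :
    MonotoneOn (fun x => coeffB m x / x) (Set.Ioi 0) := by
  intro a (ha : 0 < a) x (hx : 0 < x) hax
  simp only [coeffB_div_self hm ha.ne', coeffB_div_self hm hx.ne']
  gcongr

lemma coeffB_seven_div_seven (m : ℕ) (hm : m ≠ 0) :
    coeffB m 7 / 7 = 7 ^ (m - 1) + (20 * (m : ℝ) ^ 2 + 12 * m) / 49 := by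
  rw [coeffB_div_self hm (by norm_num)]
  ring

lemma cube_mul_le_pow_seven {n : ℕ} (hn : 2 ≤ n) : 49 * (n + 1) ^ 3 ≤ 48 * 7 ^ n := by
  induction n, hn using Nat.le_induction with
  | base => norm_num
  | succ n hn ih =>
    have h : (n + 1 + 1) ^ 3 ≤ 7 * (n + 1) ^ 3 := by ring_nf; nlinarith
    calc 49 * (n + 1 + 1) ^ 3 ≤ 7 * (49 * (n + 1) ^ 3) := by linarith
      _ ≤ 48 * 7 ^ (n + 1) := by rw [pow_succ 7 n]; linarith

lemma cube_lt_coeffB_seven_div_seven {m : ℕ} (hm : 2 ≤ m) :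
    (49 / 48) * (m : ℝ) ^ 3 < coeffB m 7 / 7 := by
  rw [coeffB_seven_div_seven m (by omega)]
  obtain rfl | hm3 := hm.eq_or_lt
  · norm_num
  obtain ⟨k, rfl⟩ : ∃ k, m = k + 1 := ⟨m - 1, by omega⟩
  have hpow : 49 * ((k : ℝ) + 1) ^ 3 ≤ 48 * 7 ^ k := by
    exact_mod_cast cube_mul_le_pow_seven (n := k) (by omega)
  push_cast
  nlinarith [(by positivity : (0 : ℝ) < (20 * ((k : ℝ) + 1) ^ 2 + 12 * (k + 1)) / 49)]

theorem stmt13 (m : ℕ) (hm : 2 ≤ m) (ρ : ℝ) (hρ : Real.sqrt 7 ≤ ρ) :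
    (49 / 48) * (m : ℝ) ^ 3 * ρ ^ 2 <
      ρ ^ (2 * m) + ((m : ℝ) / 4) * (ρ + ρ⁻¹) ^ 2 - 2 * m +
        ((2 * (m : ℝ) ^ 2 + m) / 2) * (ρ ^ 2 - 4 - (ρ ^ 2)⁻¹) := by
  have hρ0 : 0 < ρ := (Real.sqrt_pos.2 (by norm_num)).trans_le hρ
  have hx : 7 ≤ ρ ^ 2 := by
    simpa using pow_le_pow_left₀ (Real.sqrt_nonneg 7) hρ 2
  rw [coeffB_sq m hρ0.ne', ← lt_div_iff₀ (by positivity)]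
  calc (49 / 48) * (m : ℝ) ^ 3 < coeffB m 7 / 7 := cube_lt_coeffB_seven_div_seven hm
    _ ≤ coeffB m (ρ ^ 2) / ρ ^ 2 :=
      coeffB_div_self_monotoneOn (by omega) (by norm_num : (0 : ℝ) < 7)
        (by positivity : (0 : ℝ) < ρ ^ 2) hx
end

section
/- Let h be holomorphic on the annulus A(1,R) = {z ∈ ℂ : 1 < |z| < R} with Laurent expansion h(z) = Σ_{n∈ℤ} a_n zⁿ, and let U(ρ) = Σ_{n∈ℤ} |a_n|² ρ^(2n) be the mean of |h|² over the circle of radius ρ. Then for all 1 < ρ < R: (1/ρ)·d/dρ[ ρ³ · d/dρ (U(ρ)/ρ²) ] = 4·Σ_{n∈ℤ} n(n−1)|a_n|² ρ^(2n−2) ≥ 0. -/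
/-!
Convergence of the Laurent series at a real point `t` of the annulus is absolute, so
`U(t) / t² = ∑ ‖aₙ‖² t^(2n-2)` is a real series `∑ cᵢ t^(eᵢ)` converging absolutely for all `t`
in `(1, R)`. Such series may be differentiated termwise on the open interval, and the
derivative series converges absolutely there again: by Bernoulli's inequality `|m| t^m` is
dominated by `t₀^m + t₁^m` for any `t₀ < t < t₁`. Differentiating twice gives the
coefficients `(2n - 2) · 2n · ‖aₙ‖²`, and `n (n - 1) ≥ 0` for every integer `n`.
-/

open Set

lemma natCast_mul_sub_mul_pow_le {y z : ℝ} (hy : 0 < y) (hyz : y ≤ z) (k : ℕ) :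
    k * (z - y) * y ^ k ≤ y * z ^ k := by
  have hbern := one_add_mul_le_pow (a := (z - y) / y)
    (by linarith [div_nonneg (sub_nonneg.2 hyz) hy.le]) k
  rw [one_add_div hy.ne', add_sub_cancel, div_pow, le_div_iff₀ (pow_pos hy k)] at hbern
  have : (k : ℝ) * ((z - y) / y) * y ^ k * y = k * (z - y) * y ^ k := by field_simp
  nlinarith [pow_pos hy k]

lemma exists_abs_mul_zpow_le {t₀ t t₁ : ℝ} (h₀ : 0 < t₀) (h₀t : t₀ < t) (ht₁ : t < t₁) :
    ∃ C, ∀ m : ℤ, |(m : ℝ)| * t ^ m ≤ C * (t₀ ^ m + t₁ ^ m) := by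
  have ht : 0 < t := h₀.trans h₀t
  have hinv : t⁻¹ < t₀⁻¹ := inv_strictAnti₀ h₀ h₀t
  refine ⟨t / (t₁ - t) + t⁻¹ / (t₀⁻¹ - t⁻¹), fun m => ?_⟩
  have hpos : 0 ≤ t / (t₁ - t) := div_nonneg ht.le (by linarith)
  have hpos' : 0 ≤ t⁻¹ / (t₀⁻¹ - t⁻¹) := div_nonneg (inv_pos.2 ht).le (by linarith)
  obtain ⟨k, rfl | rfl⟩ := Int.eq_nat_or_neg m
  · have hk := natCast_mul_sub_mul_pow_le ht ht₁.le k
    have : (k : ℝ) * t ^ k ≤ t / (t₁ - t) * t₁ ^ k := by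
      rw [div_mul_eq_mul_div, le_div_iff₀ (by linarith)]; linarith
    simp only [zpow_natCast, Int.cast_natCast, Nat.abs_cast]
    nlinarith [pow_pos h₀ k, pow_pos (h₀.trans (h₀t.trans ht₁)) k]
  · have hk := natCast_mul_sub_mul_pow_le (inv_pos.2 ht) hinv.le k
    have : (k : ℝ) * t⁻¹ ^ k ≤ t⁻¹ / (t₀⁻¹ - t⁻¹) * t₀⁻¹ ^ k := by
      rw [div_mul_eq_mul_div, le_div_iff₀ (by linarith)]; linarith
    simp only [zpow_neg, zpow_natCast, Int.cast_neg, Int.cast_natCast, abs_neg, Nat.abs_cast,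
      ← inv_pow]
    nlinarith [pow_pos (inv_pos.2 h₀) k, pow_pos (inv_pos.2 (h₀.trans (h₀t.trans ht₁))) k]

lemma zpow_le_zpow_add_zpow {t₁ y t₂ : ℝ} (h₁ : 0 < t₁) (h₁y : t₁ ≤ y) (hy₂ : y ≤ t₂) (m : ℤ) :
    y ^ m ≤ t₁ ^ m + t₂ ^ m := by
  have hy : 0 < y := h₁.trans_le h₁y
  rcases le_total 0 m with hm | hm
  · linarith [zpow_le_zpow_left₀ hm hy.le hy₂, zpow_pos h₁ m]
  · have : y ^ m ≤ t₁ ^ m := by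
      rw [← neg_neg m, ← inv_zpow', ← inv_zpow' t₁]
      exact zpow_le_zpow_left₀ (neg_nonneg.2 hm) (inv_pos.2 hy).le (inv_anti₀ h₁ h₁y)
    linarith [zpow_pos (h₁.trans_le (h₁y.trans hy₂)) m]

section LaurentSeries

variable {ι : Type*} {c : ι → ℝ} {e : ι → ℤ} {r₁ r₂ : ℝ}

lemma summable_abs_mul_zpow_sub_one (hr₁ : 0 ≤ r₁)
    (hc : ∀ t ∈ Ioo r₁ r₂, Summable fun i => |c i| * t ^ e i) {t : ℝ} (ht : t ∈ Ioo r₁ r₂) :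
    Summable fun i => |c i * e i| * t ^ (e i - 1) := by
  obtain ⟨t₀, hr₁t₀, ht₀t⟩ := exists_between ht.1
  obtain ⟨t₃, htt₃, ht₃r₂⟩ := exists_between ht.2
  have h₀ : 0 < t₀ := hr₁.trans_lt hr₁t₀
  have ht0 : 0 < t := h₀.trans ht₀t
  obtain ⟨C, hC⟩ := exists_abs_mul_zpow_le h₀ ht₀t htt₃
  have hsum := ((hc t₀ ⟨hr₁t₀, ht₀t.trans ht.2⟩).add
    (hc t₃ ⟨ht.1.trans htt₃, ht₃r₂⟩)).mul_left (t⁻¹ * C)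
  refine hsum.of_nonneg_of_le (fun i => by positivity) fun i => ?_
  calc |c i * e i| * t ^ (e i - 1) = t⁻¹ * |c i| * (|(e i : ℝ)| * t ^ e i) := by
        rw [zpow_sub_one₀ ht0.ne', abs_mul]; ring
    _ ≤ t⁻¹ * |c i| * (C * (t₀ ^ e i + t₃ ^ e i)) :=
        mul_le_mul_of_nonneg_left (hC (e i)) (by positivity)
    _ = t⁻¹ * C * (|c i| * t₀ ^ e i + |c i| * t₃ ^ e i) := by ring

lemma hasDerivAt_tsum_mul_zpow (hr₁ : 0 ≤ r₁)
    (hc : ∀ t ∈ Ioo r₁ r₂, Summable fun i => |c i| * t ^ e i) {t : ℝ} (ht : t ∈ Ioo r₁ r₂) :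
    HasDerivAt (fun t => ∑' i, c i * t ^ e i) (∑' i, c i * e i * t ^ (e i - 1)) t := by
  obtain ⟨t₁, hr₁t₁, ht₁t⟩ := exists_between ht.1
  obtain ⟨t₂, htt₂, ht₂r₂⟩ := exists_between ht.2
  have h₁ : 0 < t₁ := hr₁.trans_lt hr₁t₁
  have hu := (summable_abs_mul_zpow_sub_one hr₁ hc ⟨hr₁t₁, ht₁t.trans ht.2⟩).add
    (summable_abs_mul_zpow_sub_one hr₁ hc ⟨ht.1.trans htt₂, ht₂r₂⟩)
  refine hasDerivAt_tsum_of_isPreconnected (g := fun i y => c i * y ^ e i)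
    (g' := fun i y => c i * e i * y ^ (e i - 1)) (t := Ioo t₁ t₂) (y₀ := t) hu isOpen_Ioo
    isPreconnected_Ioo (fun i y hy => ?_) (fun i y hy => ?_) ⟨ht₁t, htt₂⟩ ?_ ⟨ht₁t, htt₂⟩
  · simpa [mul_assoc] using
      (hasDerivAt_zpow (e i) y (Or.inl (h₁.trans hy.1).ne')).const_mul (c i)
  · rw [Real.norm_eq_abs, abs_mul, abs_of_pos (zpow_pos (h₁.trans hy.1) _), ← mul_add]
    gcongr
    exact zpow_le_zpow_add_zpow h₁ hy.1.le hy.2.le _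
  · refine Summable.of_abs ((hc t ht).congr fun i => ?_)
    rw [abs_mul, abs_of_pos (zpow_pos (h₁.trans ht₁t) _)]

lemma deriv_eq_tsum_mul_zpow_of_eqOn {f : ℝ → ℝ}
    (hf : EqOn f (fun t => ∑' i, c i * t ^ e i) (Ioo r₁ r₂)) (hr₁ : 0 ≤ r₁)
    (hc : ∀ t ∈ Ioo r₁ r₂, Summable fun i => |c i| * t ^ e i) {t : ℝ} (ht : t ∈ Ioo r₁ r₂) : deriv f t = ∑' i, c i * e i * t ^ (e i - 1) :=
  ((hasDerivAt_tsum_mul_zpow hr₁ hc ht).congr_of_eventuallyEq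
    (hf.eventuallyEq_of_mem (Ioo_mem_nhds ht.1 ht.2))).deriv

lemma Summable.abs_mul_zpow_add {t : ℝ} (ht : t ≠ 0) (h : Summable fun i => |c i| * t ^ e i)
    (k : ℤ) : Summable fun i => |c i| * t ^ (e i + k) :=
  (h.mul_right (t ^ k)).congr fun i => by rw [zpow_add₀ ht, mul_assoc]

lemma zpow_mul_tsum_mul_zpow {t : ℝ} (ht : t ≠ 0) (k : ℤ) :
    t ^ k * ∑' i, c i * t ^ e i = ∑' i, c i * t ^ (e i + k) := by
  rw [← tsum_mul_left]
  congr 1 with i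
  rw [zpow_add₀ ht]; ring

end LaurentSeries

lemma Int.cast_mul_sub_one_nonneg {R : Type*} [Ring R] [LinearOrder R] [IsStrictOrderedRing R]
    (n : ℤ) : 0 ≤ (n : R) * (n - 1) := by
  have : 0 ≤ n * (n - 1) := by nlinarith [Int.le_self_sq n]
  exact_mod_cast this

lemma Summable.sq_of_nonneg {ι : Type*} {f : ι → ℝ} (hf : Summable f) (h0 : ∀ i, 0 ≤ f i) :
    Summable fun i => f i ^ 2 :=
  (hf.mul_left (∑' i, f i)).of_nonneg_of_le (fun i => sq_nonneg _) fun i => by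
    rw [sq]; exact mul_le_mul_of_nonneg_right (hf.le_tsum i fun j _ => h0 j) (h0 i)

lemma summable_norm_sq_mul_zpow {a : ℤ → ℂ} {t : ℝ} (ht : 0 < t)
    (ha : Summable fun n => a n * (t : ℂ) ^ n) : Summable fun n => |‖a n‖ ^ 2| * t ^ (2 * n) :=
  ((summable_norm_iff.2 ha).sq_of_nonneg fun _ => norm_nonneg _).congr fun n => by
    rw [norm_mul, norm_zpow, Complex.norm_real, Real.norm_of_nonneg ht.le, mul_pow,
      abs_of_nonneg (sq_nonneg _), mul_comm 2 n, zpow_mul, zpow_ofNat]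

theorem stmt15_general (R : ℝ) (h : ℂ → ℂ) (a : ℤ → ℂ)
    (hsum : ∀ z : ℂ, 1 < ‖z‖ → ‖z‖ < R →
      HasSum (fun n : ℤ => a n * z ^ n) (h z))
    (U : ℝ → ℝ)
    (hU : ∀ ρ : ℝ, 1 < ρ → ρ < R →
      U ρ = ∑' n : ℤ, ‖a n‖ ^ 2 * ρ ^ (2 * n)) :
    ∀ ρ : ℝ, 1 < ρ → ρ < R →
      (1 / ρ) * deriv (fun s : ℝ => s ^ 3 * deriv (fun t : ℝ => U t / t ^ 2) s) ρ =
          4 * ∑' n : ℤ, (n : ℝ) * ((n : ℝ) - 1) * ‖a n‖ ^ 2 * ρ ^ (2 * n - 2) ∧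
        0 ≤ 4 * ∑' n : ℤ, (n : ℝ) * ((n : ℝ) - 1) * ‖a n‖ ^ 2 * ρ ^ (2 * n - 2) := by
  intro ρ hρ1 hρR
  set b : ℤ → ℝ := fun n => ‖a n‖ ^ 2
  have hpos : ∀ t ∈ Ioo 1 R, 0 < t := fun t ht => one_pos.trans ht.1
  have hb : ∀ t ∈ Ioo 1 R, Summable fun n => |b n| * t ^ (2 * n + -2) := fun t ht =>
    have hz : 1 < ‖(t : ℂ)‖ ∧ ‖(t : ℂ)‖ < R := by simpa [abs_of_pos (hpos t ht)] using ht
    (summable_norm_sq_mul_zpow (hpos t ht) (hsum t hz.1 hz.2).summable).abs_mul_zpow_add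
      (hpos t ht).ne' (-2)
  have hb' : ∀ t ∈ Ioo 1 R, Summable fun n => |b n * (2 * n + -2 : ℤ)| * t ^ (2 * n) :=
    fun t ht => ((summable_abs_mul_zpow_sub_one zero_le_one hb ht).abs_mul_zpow_add
      (hpos t ht).ne' 3).congr fun n => by ring_nf
  have hW : EqOn (fun t => U t / t ^ 2) (fun t => ∑' n, b n * t ^ (2 * n + -2)) (Ioo 1 R) :=
    fun t ht => by
      beta_reduce
      rw [hU t ht.1 ht.2, ← zpow_mul_tsum_mul_zpow (hpos t ht).ne', zpow_neg, zpow_ofNat,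
        inv_mul_eq_div]
  have hV : EqOn (fun s => s ^ 3 * deriv (fun t => U t / t ^ 2) s)
      (fun s => ∑' n, b n * (2 * n + -2 : ℤ) * s ^ (2 * n)) (Ioo 1 R) := fun s hs => by
    beta_reduce
    rw [deriv_eq_tsum_mul_zpow_of_eqOn hW zero_le_one hb hs, ← zpow_ofNat,
      zpow_mul_tsum_mul_zpow (hpos s hs).ne']
    congr with n; ring_nf
  rw [deriv_eq_tsum_mul_zpow_of_eqOn hV zero_le_one hb' ⟨hρ1, hρR⟩]
  refine ⟨?_, mul_nonneg zero_le_four (tsum_nonneg fun n =>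
    mul_nonneg (mul_nonneg (Int.cast_mul_sub_one_nonneg n) (sq_nonneg _)) (by positivity))⟩
  rw [one_div, ← tsum_mul_left, ← tsum_mul_left]
  congr with n
  rw [show 2 * n - 1 = 2 * n - 2 + 1 by ring, zpow_add_one₀ (hpos ρ ⟨hρ1, hρR⟩).ne']
  field_simp
  push_cast
  ring

theorem stmt15 (R : ℝ) (hR : 1 < R) (h : ℂ → ℂ) (a : ℤ → ℂ)
    (hol : DifferentiableOn ℂ h {z : ℂ | 1 < ‖z‖ ∧ ‖z‖ < R})
    (hsum : ∀ z : ℂ, 1 < ‖z‖ → ‖z‖ < R →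
      HasSum (fun n : ℤ => a n * z ^ n) (h z))
    (U : ℝ → ℝ)
    (hU : ∀ ρ : ℝ, 1 < ρ → ρ < R →
      U ρ = ∑' n : ℤ, ‖a n‖ ^ 2 * ρ ^ (2 * n)) :
    ∀ ρ : ℝ, 1 < ρ → ρ < R →
      (1 / ρ) * deriv (fun s : ℝ => s ^ 3 * deriv (fun t : ℝ => U t / t ^ 2) s) ρ =
          4 * ∑' n : ℤ, (n : ℝ) * ((n : ℝ) - 1) * ‖a n‖ ^ 2 * ρ ^ (2 * n - 2) ∧
        0 ≤ 4 * ∑' n : ℤ, (n : ℝ) * ((n : ℝ) - 1) * ‖a n‖ ^ 2 * ρ ^ (2 * n - 2) :=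
  stmt15_general R h a hsum U hU
end
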